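/- Let p be a prime and let E = {e_1 < e_2 < e_3 < ...} be an infinite increasing set of positive natural numbers. Let N(p,E) be the set of natural numbers n that are divisible by p and whose exponent of p in the canonical (prime) factorization lies in E, i.e. N(p,E) = {n ∈ ℕ : v_p(n) ∈ E}. Then N(p,E) is Buck measurable and μ(N(p,E)) = (1 - 1/p) Σ_{n=1}^∞ 1/p^{e_n}. -/

import Mathlib

open scoped BigOperators

/-- Buck's measure density: the infimum of `∑ 1/mᵢ` over finite covers of `S`
by arithmetic progressions `{n | n ≡ rᵢ [MOD mᵢ]}`. -/
noncomputable def buckDensity (S : Set ℕ) : ℝ :=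
  sInf {x : ℝ | ∃ (k : ℕ) (r m : Fin k → ℕ), (∀ i, 0 < m i) ∧
    (S ⊆ ⋃ i, {n : ℕ | n ≡ r i [MOD m i]}) ∧ x = ∑ i, (1 : ℝ) / (m i)}

/-- A set is Buck measurable if `μ*(S) + μ*(ℕ \ S) = 1`. -/
def BuckMeasurable (S : Set ℕ) : Prop :=
  buckDensity S + buckDensity Sᶜ = 1

/-- `R(S : m)`: the number of residue classes modulo `m` occupied by `S`. -/
noncomputable def residueCount (S : Set ℕ) (m : ℕ) : ℕ :=
  ((fun s => s % m) '' S).ncard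

/-! For `1 ≤ t < p` the classes `t * p ^ j mod p ^ (j + 1)` partition
`{n | v_p(n) = j}` and have total weight `(1 - 1/p) / p ^ j`. Adding the class `0 mod p ^ B`
covers `{n | v_p(n) ∈ E}` with weight `1/p^B + A_B`, where `A_B` sums `(1 - 1/p) / p ^ j` over
`j ∈ E`, `j < B`; the same construction for the complement of `E` has weight `1 - A_B`. Since any
cover of `ℕ` by progressions has weight at least `1` (count residues modulo the product of the
moduli), letting `B → ∞` pins both outer densities. -/

open Finset

section BuckDensity

def buckCoverSums (S : Set ℕ) : Set ℝ :=
  {x : ℝ | ∃ (k : ℕ) (r m : Fin k → ℕ), (∀ i, 0 < m i) ∧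
    (S ⊆ ⋃ i, {n : ℕ | n ≡ r i [MOD m i]}) ∧ x = ∑ i, (1 : ℝ) / (m i)}

lemma buckDensity_eq_sInf (S : Set ℕ) : buckDensity S = sInf (buckCoverSums S) := rfl

lemma bddBelow_buckCoverSums (S : Set ℕ) : BddBelow (buckCoverSums S) := by
  refine ⟨0, ?_⟩
  rintro x ⟨k, r, m, hm, _, rfl⟩
  exact sum_nonneg fun i _ => by positivity

lemma one_mem_buckCoverSums (S : Set ℕ) : (1 : ℝ) ∈ buckCoverSums S :=
  ⟨1, 0, 1, fun _ => one_pos, fun _ _ => Set.mem_iUnion.2 ⟨0, Nat.modEq_one⟩, by simp⟩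

lemma one_le_sum_one_div_of_forall_modEq {k : ℕ} (r m : Fin k → ℕ) (hm : ∀ i, 0 < m i)
    (hcov : ∀ n : ℕ, ∃ i, n ≡ r i [MOD m i]) :
    (1 : ℝ) ≤ ∑ i, (1 : ℝ) / (m i) := by
  classical
  set M := ∏ i, m i
  have hM : (0 : ℝ) < M := by exact_mod_cast prod_pos fun i _ => hm i
  have hdvd : ∀ i, m i ∣ M := fun i => dvd_prod_of_mem _ (mem_univ i)
  have hcount : ∀ i, #{n ∈ range M | n ≡ r i [MOD m i]} = M / m i := by
    intro i
    rw [← Nat.count_eq_card_filter_range, Nat.count_modEq_card _ (hm i),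
      Nat.mod_eq_zero_of_dvd (hdvd i)]
    simp
  have hcard : M ≤ ∑ i, M / m i :=
    calc M = #(range M) := (card_range M).symm
      _ ≤ #(univ.biUnion fun i => {n ∈ range M | n ≡ r i [MOD m i]}) :=
        card_le_card fun n hn =>
          let ⟨i, hi⟩ := hcov n
          mem_biUnion.2 ⟨i, mem_univ i, mem_filter.2 ⟨hn, hi⟩⟩
      _ ≤ ∑ i, #{n ∈ range M | n ≡ r i [MOD m i]} := card_biUnion_le
      _ = ∑ i, M / m i := by simp only [hcount]
  have hcard' : (M : ℝ) ≤ M * ∑ i, (1 : ℝ) / (m i) := by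
    rw [mul_sum]
    calc (M : ℝ) ≤ ((∑ i, M / m i : ℕ) : ℝ) := by exact_mod_cast hcard
      _ = ∑ i, (M : ℝ) * (1 / (m i)) := by
        push_cast [Nat.cast_div (hdvd _) (Nat.cast_ne_zero.2 (hm _).ne')]
        simp only [mul_one_div]
  exact le_of_mul_le_mul_left (by rwa [mul_one]) hM

lemma buckDensity_le_sum {S : Set ℕ} {ι : Type*} (T : Finset ι) (r m : ι → ℕ)
    (hm : ∀ i ∈ T, 0 < m i) (hcov : S ⊆ ⋃ i ∈ T, {n : ℕ | n ≡ r i [MOD m i]}) :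
    buckDensity S ≤ ∑ i ∈ T, (1 : ℝ) / (m i) := by
  refine csInf_le (bddBelow_buckCoverSums S)
    ⟨#T, fun i => r (T.equivFin.symm i), fun i => m (T.equivFin.symm i),
      fun i => hm _ (T.equivFin.symm i).2, fun n hn => ?_, ?_⟩
  · obtain ⟨i, hi, hni⟩ := Set.mem_iUnion₂.1 (hcov hn)
    exact Set.mem_iUnion.2 ⟨T.equivFin ⟨i, hi⟩, by simpa using hni⟩
  · rw [← sum_attach T]
    exact (Equiv.sum_comp T.equivFin.symm fun a => (1 : ℝ) / (m a.1)).symm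

lemma one_le_buckDensity_add_compl (S : Set ℕ) : 1 ≤ buckDensity S + buckDensity Sᶜ := by
  rw [buckDensity_eq_sInf, buckDensity_eq_sInf, ← sub_le_iff_le_add]
  refine le_csInf ⟨1, one_mem_buckCoverSums S⟩ ?_
  rintro _ ⟨k, r, m, hm, hcov, rfl⟩
  rw [sub_le_comm]
  refine le_csInf ⟨1, one_mem_buckCoverSums Sᶜ⟩ ?_
  rintro _ ⟨k', r', m', hm', hcov', rfl⟩
  have happend : ∑ i, (1 : ℝ) / Fin.append m m' i = ∑ i, (1 : ℝ) / m i + ∑ i, (1 : ℝ) / m' i := by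
    simp [Fin.sum_univ_add]
  rw [sub_le_iff_le_add, add_comm, ← happend]
  refine one_le_sum_one_div_of_forall_modEq (Fin.append r r') (Fin.append m m')
    (Fin.addCases (by simpa using hm) (by simpa using hm')) fun n => ?_
  by_cases hn : n ∈ S
  · obtain ⟨i, hi⟩ := Set.mem_iUnion.1 (hcov hn)
    exact ⟨Fin.castAdd k' i, by simpa using hi⟩
  · obtain ⟨i, hi⟩ := Set.mem_iUnion.1 (hcov' hn)
    exact ⟨Fin.natAdd k i, by simpa using hi⟩

lemma buckMeasurable_of_buckDensity_le {S : Set ℕ} {a : ℝ} (hS : buckDensity S ≤ a)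
    (hSc : buckDensity Sᶜ ≤ 1 - a) : BuckMeasurable S ∧ buckDensity S = a := by
  have := one_le_buckDensity_add_compl S
  exact ⟨by unfold BuckMeasurable; linarith, by linarith⟩

end BuckDensity

section PadicValuation

variable {p : ℕ}

lemma exists_modEq_mul_pow_padicValNat (hp : p.Prime) {n : ℕ} (hn : n ≠ 0) :
    ∃ t ∈ Ico 1 p, n ≡ t * p ^ padicValNat p n [MOD p ^ (padicValNat p n + 1)] := by
  have : Fact p.Prime := ⟨hp⟩
  set j := padicValNat p n
  obtain ⟨u, hu⟩ : p ^ j ∣ n := pow_padicValNat_dvd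
  have hu_coprime : ¬p ∣ u := by
    rintro ⟨v, rfl⟩
    exact pow_succ_padicValNat_not_dvd (p := p) hn ⟨v, by rw [pow_succ, mul_assoc]; exact hu⟩
  refine ⟨u % p, mem_Ico.2 ⟨Nat.pos_of_ne_zero fun h => hu_coprime (Nat.dvd_of_mod_eq_zero h),
    Nat.mod_lt u hp.pos⟩, ?_⟩
  rw [hu, pow_succ, mul_comm (u % p)]
  exact ((Nat.mod_modEq u p).mul_left' (p ^ j)).symm

noncomputable def valuationDensity (p j : ℕ) : ℝ := (1 - 1 / (p : ℝ)) / (p : ℝ) ^ j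

lemma sum_range_valuationDensity (hp : p.Prime) (B : ℕ) :
    ∑ j ∈ range B, valuationDensity p j = 1 - 1 / (p : ℝ) ^ B := by
  have hp0 : (p : ℝ) ≠ 0 := by exact_mod_cast hp.ne_zero
  induction B with
  | zero => simp
  | succ B ih =>
    rw [sum_range_succ, ih, valuationDensity]
    field_simp
    ring

lemma summable_valuationDensity (hp : p.Prime) : Summable (valuationDensity p) := by
  have hp1 : (1 : ℝ) < p := by exact_mod_cast hp.one_lt
  have hq : 1 / (p : ℝ) < 1 := (div_lt_one (by linarith)).2 hp1
  refine ((summable_geometric_of_lt_one (by positivity) hq).mul_left (1 - 1 / (p : ℝ))).congr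
    fun j => ?_
  rw [valuationDensity, one_div_pow, mul_one_div]

lemma padicValNat_lt_of_not_pow_dvd {n B : ℕ} (h : ¬p ^ B ∣ n) : padicValNat p n < B := by
  by_contra hB
  exact h ((pow_dvd_pow p (not_lt.1 hB)).trans pow_padicValNat_dvd)

lemma sum_Ico_one_div_pow_succ (hp : p.Prime) (j : ℕ) :
    ∑ _t ∈ Ico 1 p, (1 : ℝ) / ((p ^ (j + 1) : ℕ) : ℝ) = valuationDensity p j := by
  have hp0 : (p : ℝ) ≠ 0 := by exact_mod_cast hp.ne_zero
  rw [sum_const, Nat.card_Ico, nsmul_eq_mul, Nat.cast_sub hp.one_le, valuationDensity]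
  push_cast
  field_simp
  ring

lemma buckDensity_setOf_padicValNat_mem_le (hp : p.Prime) (E : Set ℕ) (B : ℕ) :
    buckDensity {n | padicValNat p n ∈ E} ≤
      1 / (p : ℝ) ^ B + ∑ j ∈ range B, E.indicator (valuationDensity p) j := by
  classical
  set J := {j ∈ range B | j ∈ E}
  let T : Finset (Option (ℕ × ℕ)) := insert none ((J ×ˢ Ico 1 p).map .some)
  let r : Option (ℕ × ℕ) → ℕ := fun o => o.elim 0 fun q => q.2 * p ^ q.1
  let m : Option (ℕ × ℕ) → ℕ := fun o => o.elim (p ^ B) fun q => p ^ (q.1 + 1)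
  have hm : ∀ i ∈ T, 0 < m i := by
    rintro (_ | _) _ <;> exact pow_pos hp.pos _
  have hcov : {n | padicValNat p n ∈ E} ⊆ ⋃ i ∈ T, {n : ℕ | n ≡ r i [MOD m i]} := by
    intro n hn
    by_cases hB : p ^ B ∣ n
    · exact Set.mem_iUnion₂.2 ⟨none, mem_insert_self _ _, Nat.modEq_zero_iff_dvd.2 hB⟩
    · have hn0 : n ≠ 0 := by rintro rfl; exact hB (dvd_zero _)
      obtain ⟨t, ht, hmod⟩ := exists_modEq_mul_pow_padicValNat hp hn0
      have hJ : padicValNat p n ∈ J :=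
        mem_filter.2 ⟨mem_range.2 (padicValNat_lt_of_not_pow_dvd hB), hn⟩
      exact Set.mem_iUnion₂.2 ⟨some (padicValNat p n, t),
        mem_insert_of_mem (mem_map_of_mem _ (mem_product.2 ⟨hJ, ht⟩)), hmod⟩
  refine (buckDensity_le_sum T r m hm hcov).trans_eq ?_
  rw [sum_insert (by simp), sum_map, sum_product, sum_indicator_eq_sum_filter]
  simp only [m, Option.elim, Function.Embedding.some_apply, sum_Ico_one_div_pow_succ hp]
  push_cast
  rfl

lemma buckDensity_compl_setOf_padicValNat_mem_le (hp : p.Prime) (E : Set ℕ) (B : ℕ) :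
    buckDensity {n | padicValNat p n ∈ E}ᶜ ≤
      1 - ∑ j ∈ range B, E.indicator (valuationDensity p) j := by
  have hsplit := congrArg (∑ j ∈ range B, · j) (E.indicator_self_add_compl (valuationDensity p))
  simp only [Pi.add_apply, sum_add_distrib, sum_range_valuationDensity hp] at hsplit
  have hcompl : buckDensity {n | padicValNat p n ∈ E}ᶜ ≤
      1 / (p : ℝ) ^ B + ∑ j ∈ range B, Eᶜ.indicator (valuationDensity p) j :=
    buckDensity_setOf_padicValNat_mem_le hp Eᶜ B
  linarith

theorem buckMeasurable_setOf_padicValNat_mem (hp : p.Prime) (E : Set ℕ) :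
    BuckMeasurable {n | padicValNat p n ∈ E} ∧
      buckDensity {n | padicValNat p n ∈ E} = ∑' j, E.indicator (valuationDensity p) j := by
  have hp1 : (1 : ℝ) < p := by exact_mod_cast hp.one_lt
  have hpartial := ((summable_valuationDensity hp).indicator E).hasSum.tendsto_sum_nat
  have htail : Filter.Tendsto (fun B => 1 / (p : ℝ) ^ B) Filter.atTop (nhds 0) := by
    simpa only [one_div_pow] using tendsto_pow_atTop_nhds_zero_of_lt_one (by positivity)
      ((div_lt_one (by linarith)).2 hp1)
  refine buckMeasurable_of_buckDensity_le ?_ ?_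
  · have hlim := htail.add hpartial
    rw [zero_add] at hlim
    exact ge_of_tendsto' hlim (buckDensity_setOf_padicValNat_mem_le hp E)
  · exact ge_of_tendsto' (tendsto_const_nhds.sub hpartial)
      (buckDensity_compl_setOf_padicValNat_mem_le hp E)

end PadicValuation

theorem stmt_4_general (p : ℕ) (hp : p.Prime) (e : ℕ → ℕ) (he : StrictMono e) :
    BuckMeasurable {n : ℕ | padicValNat p n ∈ Set.range e} ∧
      buckDensity {n : ℕ | padicValNat p n ∈ Set.range e} =
        (1 - 1 / (p : ℝ)) * ∑' n, (1 : ℝ) / (p : ℝ) ^ (e n) := by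
  obtain ⟨hmeas, hdensity⟩ := buckMeasurable_setOf_padicValNat_mem hp (Set.range e)
  refine ⟨hmeas, hdensity.trans ?_⟩
  rw [← _root_.tsum_subtype, tsum_range _ he.injective, ← tsum_mul_left]
  simp only [valuationDensity, mul_one_div]

theorem stmt_4 (p : ℕ) (hp : p.Prime) (e : ℕ → ℕ) (he : StrictMono e)
    (hpos : ∀ n, 0 < e n) :
    BuckMeasurable {n : ℕ | padicValNat p n ∈ Set.range e} ∧
      buckDensity {n : ℕ | padicValNat p n ∈ Set.range e} =
        (1 - 1 / (p : ℝ)) * ∑' n, (1 : ℝ) / (p : ℝ) ^ (e n) :=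
  stmt_4_general p hp e he
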